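/- arXiv:2502.15037 — 5 statements merged into one kernel-verified Lean document; each statement's English description precedes it below -/
import Mathlib

section
/- Let n ≥ 2 and fix, for each edge index j ∈ {0, …, n−2}, vectors b₁^j, b₂^j ∈ ℝ³, and for each vertex index k ∈ {1, …, n−1} a curvature binormal vector κb^k ∈ ℝ³ and undeformed material curvatures ω̄^{(k,j)} ∈ ℝ² for j ∈ {k−1, k}. Let B be a fixed symmetric 2×2 real matrix. For θ = (θ^0, …, θ^{n−2}) ∈ ℝ^{n−1}, define m₁^j(θ^j) = (cos θ^j) b₁^j + (sin θ^j) b₂^j, m₂^j(θ^j) = −(sin θ^j) b₁^j + (cos θ^j) b₂^j, ω^{(k,j)}(θ) = ( κb^k · m₁^j(θ^j), κb^k · m₂^j(θ^j) ) ∈ ℝ², and the bending energy P_bend(θ) = Σ_{k=1}^{n−1} Σ_{j=k−1}^{k} (1/2) (ω^{(k,j)}(θ) − ω̄^{(k,j)})ᵀ B (ω^{(k,j)}(θ) − ω̄^{(k,j)}). Then for every index i with 1 ≤ i ≤ n−2, the partial derivative of P_bend with respect to θ^i exists and equals Σ_{k=i}^{i+1} ( B (ω^{(k,i)}(θ) −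 ω̄^{(k,i)}) )ᵀ J ω^{(k,i)}(θ), where J is the 2×2 matrix with first row (0, 1) and second row (−1, 0). -/
open scoped Matrix

/-- Material frame vector `m₁(θ) = (cos θ) b₁ + (sin θ) b₂`. -/
noncomputable def matFrame1 (b₁ b₂ : Fin 3 → ℝ) (s : ℝ) : Fin 3 → ℝ :=
  Real.cos s • b₁ + Real.sin s • b₂

/-- Material frame vector `m₂(θ) = −(sin θ) b₁ + (cos θ) b₂`. -/
noncomputable def matFrame2 (b₁ b₂ : Fin 3 → ℝ) (s : ℝ) : Fin 3 → ℝ :=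
  -Real.sin s • b₁ + Real.cos s • b₂

/-- Material curvature `ω = (κb · m₁(θ), κb · m₂(θ)) ∈ ℝ²`. -/
noncomputable def matCurv (κb b₁ b₂ : Fin 3 → ℝ) (s : ℝ) : Fin 2 → ℝ :=
  ![κb ⬝ᵥ matFrame1 b₁ b₂ s, κb ⬝ᵥ matFrame2 b₁ b₂ s]

/-- The bending potential energy
`P_bend(θ) = Σ_{k=1}^{n−1} Σ_{j=k−1}^{k} (1/2)(ω^{(k,j)}(θ) − ω̄^{(k,j)})ᵀ B (ω^{(k,j)}(θ) − ω̄^{(k,j)})`. -/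
noncomputable def Pbend (n : ℕ) (b₁ b₂ κb : ℕ → Fin 3 → ℝ)
    (ωbar : ℕ → ℕ → Fin 2 → ℝ) (B : Matrix (Fin 2) (Fin 2) ℝ) (θ : ℕ → ℝ) : ℝ :=
  ∑ k ∈ Finset.Icc 1 (n - 1), ∑ j ∈ Finset.Icc (k - 1) k,
    (1 / 2) * ((matCurv (κb k) (b₁ j) (b₂ j) (θ j) - ωbar k j) ⬝ᵥ
      B.mulVec (matCurv (κb k) (b₁ j) (b₂ j) (θ j) - ωbar k j))

/-!
Rotating the Bishop frame by `θ` rotates the material curvature `ω(θ)` the opposite way in the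
plane, so `dω/dθ = J ω`. For symmetric `B` the derivative of `½ (ω - ω̄)ᵀ B (ω - ω̄)` is then
`(B (ω - ω̄))ᵀ J ω`, and `θ^i` enters only the terms `(k, j)` of the energy with `j = i`,
that is `k ∈ {i, i + 1}`.
-/

open Finset

section Calculus

variable {ι : Type*} [Fintype ι] {t : ℝ}

theorem HasDerivAt.dotProduct {u v : ℝ → ι → ℝ} {u' v' : ι → ℝ}
    (hu : HasDerivAt u u' t) (hv : HasDerivAt v v' t) :
    HasDerivAt (fun s => u s ⬝ᵥ v s) (u' ⬝ᵥ v t + u t ⬝ᵥ v') t := by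
  have hcomp (i : ι) : HasDerivAt (fun s => u s i * v s i) (u' i * v t i + u t i * v' i) t :=
    (hasDerivAt_pi.mp hu i).mul (hasDerivAt_pi.mp hv i)
  have hsum := HasDerivAt.fun_sum (u := univ) fun i _ => hcomp i
  rwa [sum_add_distrib] at hsum

theorem HasDerivAt.const_dotProduct (w : ι → ℝ) {u : ℝ → ι → ℝ} {u' : ι → ℝ}
    (hu : HasDerivAt u u' t) : HasDerivAt (fun s => w ⬝ᵥ u s) (w ⬝ᵥ u') t := by
  simpa using (hasDerivAt_const t w).dotProduct hu

theorem HasDerivAt.const_mulVec (B : Matrix ι ι ℝ) {u : ℝ → ι → ℝ} {u' : ι → ℝ}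
    (hu : HasDerivAt u u' t) : HasDerivAt (fun s => B *ᵥ u s) (B *ᵥ u') t :=
  hasDerivAt_pi.mpr fun i => hu.const_dotProduct (B i)

theorem HasDerivAt.half_dotProduct_mulVec_self {B : Matrix ι ι ℝ} (hB : B.IsSymm)
    {u : ℝ → ι → ℝ} {u' : ι → ℝ} (hu : HasDerivAt u u' t) :
    HasDerivAt (fun s => 1 / 2 * (u s ⬝ᵥ B *ᵥ u s)) (B *ᵥ u t ⬝ᵥ u') t := by
  have hsymm : u t ⬝ᵥ B *ᵥ u' = B *ᵥ u t ⬝ᵥ u' := by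
    rw [Matrix.dotProduct_mulVec, ← Matrix.mulVec_transpose, hB.eq]
  refine ((hu.dotProduct (hu.const_mulVec B)).const_mul (1 / 2)).congr_deriv ?_
  rw [hsymm, dotProduct_comm u']
  ring

end Calculus

section MaterialFrame

variable (b₁ b₂ : Fin 3 → ℝ) (t : ℝ)

theorem hasDerivAt_matFrame1 : HasDerivAt (matFrame1 b₁ b₂) (matFrame2 b₁ b₂ t) t :=
  ((Real.hasDerivAt_cos t).smul_const b₁).add ((Real.hasDerivAt_sin t).smul_const b₂)

theorem hasDerivAt_matFrame2 : HasDerivAt (matFrame2 b₁ b₂) (-matFrame1 b₁ b₂ t) t :=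
  (((Real.hasDerivAt_sin t).neg.smul_const b₁).add
    ((Real.hasDerivAt_cos t).smul_const b₂)).congr_deriv
      (by rw [matFrame1, neg_add, neg_smul, neg_smul])

theorem hasDerivAt_matCurv (κb : Fin 3 → ℝ) :
    HasDerivAt (matCurv κb b₁ b₂) (!![(0 : ℝ), 1; -1, 0] *ᵥ matCurv κb b₁ b₂ t) t := by
  refine hasDerivAt_pi.mpr (Fin.forall_fin_two.mpr ⟨?_, ?_⟩)
  · simpa [matCurv] using (hasDerivAt_matFrame1 b₁ b₂ t).const_dotProduct κb
  · simpa [matCurv] using (hasDerivAt_matFrame2 b₁ b₂ t).const_dotProduct κb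

end MaterialFrame

theorem sum_Icc_sum_Icc_pred_ite_eq {M : Type*} [AddCommMonoid M] {n i : ℕ} (hi1 : 1 ≤ i)
    (hi2 : i ≤ n - 2) (g : ℕ → M) :
    ∑ k ∈ Icc 1 (n - 1), ∑ j ∈ Icc (k - 1) k, (if j = i then g k else 0) =
      ∑ k ∈ Icc i (i + 1), g k := by
  simp_rw [sum_ite_eq', ← sum_filter]
  refine sum_congr (ext fun k => ?_) fun _ _ => rfl
  simp only [mem_filter, mem_Icc]
  omega

theorem bending_energy_partial_derivative_general
    (n : ℕ) (b₁ b₂ κb : ℕ → Fin 3 → ℝ)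
    (ωbar : ℕ → ℕ → Fin 2 → ℝ) (B : Matrix (Fin 2) (Fin 2) ℝ) (hB : B.IsSymm)
    (θ : ℕ → ℝ) (i : ℕ) (hi1 : 1 ≤ i) (hi2 : i ≤ n - 2) :
    HasDerivAt (fun s : ℝ => Pbend n b₁ b₂ κb ωbar B (Function.update θ i s))
      (∑ k ∈ Finset.Icc i (i + 1),
        (B.mulVec (matCurv (κb k) (b₁ i) (b₂ i) (θ i) - ωbar k i)) ⬝ᵥ
          ((!![(0 : ℝ), 1; -1, 0]).mulVec (matCurv (κb k) (b₁ i) (b₂ i) (θ i))))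
      (θ i) := by
  rw [← sum_Icc_sum_Icc_pred_ite_eq hi1 hi2]
  refine HasDerivAt.fun_sum fun k _ => HasDerivAt.fun_sum fun j _ => ?_
  by_cases hji : j = i
  · subst hji
    simp only [Function.update_self, if_true]
    exact ((hasDerivAt_matCurv _ _ _ _).sub_const _).half_dotProduct_mulVec_self hB
  · simp only [Function.update_of_ne hji, if_neg hji]
    exact hasDerivAt_const _ _

/-- The partial derivative of the bending energy with respect to `θ^i`,
for `1 ≤ i ≤ n − 2`, exists and equals
`Σ_{k=i}^{i+1} (B (ω^{(k,i)}(θ) − ω̄^{(k,i)}))ᵀ J ω^{(k,i)}(θ)` with `J = !![0,1;-1,0]`. -/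
theorem bending_energy_partial_derivative
    (n : ℕ) (hn : 2 ≤ n) (b₁ b₂ κb : ℕ → Fin 3 → ℝ)
    (ωbar : ℕ → ℕ → Fin 2 → ℝ) (B : Matrix (Fin 2) (Fin 2) ℝ) (hB : B.IsSymm)
    (θ : ℕ → ℝ) (i : ℕ) (hi1 : 1 ≤ i) (hi2 : i ≤ n - 2) :
    HasDerivAt (fun s : ℝ => Pbend n b₁ b₂ κb ωbar B (Function.update θ i s))
      (∑ k ∈ Finset.Icc i (i + 1),
        (B.mulVec (matCurv (κb k) (b₁ i) (b₂ i) (θ i) - ωbar k i)) ⬝ᵥ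
          ((!![(0 : ℝ), 1; -1, 0]).mulVec (matCurv (κb k) (b₁ i) (b₂ i) (θ i))))
      (θ i) :=
  bending_energy_partial_derivative_general n b₁ b₂ κb ωbar B hB θ i hi1 hi2
end

section
/- Under the combined hypotheses of the bending and twisting settings — namely, fixed vectors b₁^j, b₂^j ∈ ℝ³ (j = 0, …, n−2), fixed κb^k ∈ ℝ³ and ω̄^{(k,j)} ∈ ℝ², a symmetric 2×2 matrix B, and twisting stiffnesses β^k ∈ ℝ — define the total potential energy P(θ) = P_bend(θ) + P_twist(θ) on ℝ^{n−1}, where P_bend(θ) = Σ_{k=1}^{n−1} Σ_{j=k−1}^{k} (1/2)(ω^{(k,j)}(θ) − ω̄^{(k,j)})ᵀ B (ω^{(k,j)}(θ) − ω̄^{(k,j)}) with ω^{(k,j)}(θ) = ( κb^k · m₁^j(θ^j), κb^k · m₂^j(θ^j) ), and P_twist(θ) = Σ_{k=1}^{n−1} (1/2) β^k (θ^k − θ^{k−1})². Then for every i with 1 ≤ i ≤ n−2, the partial derivative of P with respect to θ^i exists and equals Σ_{k=i}^{i+1} ( B (ω^{(k,i)}(θ) − ω̄^{(k,i)}) )ᵀ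 J ω^{(k,i)}(θ) + β^i (θ^i − θ^{i−1}) − β^{i+1} (θ^{i+1} − θ^i), where J is the 2×2 matrix with first row (0, 1) and second row (−1, 0). -/
open scoped Matrix

/-- The twisting potential energy. -/
noncomputable def Ptwist (n : ℕ) (β : ℕ → ℝ) (θ : ℕ → ℝ) : ℝ :=
  ∑ k ∈ Finset.Icc 1 (n - 1), (1 / 2) * β k * (θ k - θ (k - 1)) ^ 2

/-!
Only the bending terms with `j = i` and the twisting terms with `k ∈ {i, i + 1}` depend on `θ^i`.
Since `m₁' = m₂` and `m₂' = -m₁`, the material curvature satisfies `ω' = J ω`, and for symmetric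
`B` the derivative of `½ vᵀ B v` along a curve `v` is `(B v)ᵀ v'`; the chain rule and a
collapse of the index sums give the formula.
-/

open Finset

section Calculus

variable {𝕜 : Type*} [NontriviallyNormedField 𝕜] {ι : Type*} [Fintype ι]
  {f g : 𝕜 → ι → 𝕜} {f' g' : ι → 𝕜} {t : 𝕜}

theorem HasDerivAt.dotProduct_s6 (hf : HasDerivAt f f' t) (hg : HasDerivAt g g' t) :
    HasDerivAt (fun s => f s ⬝ᵥ g s) (f' ⬝ᵥ g t + f t ⬝ᵥ g') t := by
  rw [hasDerivAt_pi] at hf hg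
  exact (HasDerivAt.fun_sum fun i (_ : i ∈ univ) => (hf i).fun_mul (hg i)).congr_deriv
    sum_add_distrib

theorem HasDerivAt.mulVec {m : Type*} (A : Matrix m ι 𝕜) (hf : HasDerivAt f f' t) :
    HasDerivAt (fun s => A *ᵥ f s) (A *ᵥ f') t := by
  rw [hasDerivAt_pi]
  intro i
  simpa [Matrix.mulVec] using (hasDerivAt_const t (A i)).dotProduct_s6 hf

theorem HasDerivAt.dotProduct_mulVec_self {A : Matrix ι ι 𝕜} (hA : A.IsSymm)
    (hf : HasDerivAt f f' t) :
    HasDerivAt (fun s => f s ⬝ᵥ A *ᵥ f s) (2 * (A *ᵥ f t ⬝ᵥ f')) t := by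
  have hswap : f t ⬝ᵥ A *ᵥ f' = A *ᵥ f t ⬝ᵥ f' := by
    rw [Matrix.dotProduct_mulVec, ← Matrix.mulVec_transpose, hA.eq]
  convert hf.dotProduct_s6 (hf.mulVec A) using 1
  rw [hswap, dotProduct_comm f']
  ring

end Calculus

section Frame

variable (b₁ b₂ : Fin 3 → ℝ) (t : ℝ)

theorem hasDerivAt_bendingTerm (κb : Fin 3 → ℝ) (ω₀ : Fin 2 → ℝ)
    {B : Matrix (Fin 2) (Fin 2) ℝ} (hB : B.IsSymm) :
    HasDerivAt (fun s => 1 / 2 * ((matCurv κb b₁ b₂ s - ω₀) ⬝ᵥ B *ᵥ (matCurv κb b₁ b₂ s - ω₀)))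
      (B *ᵥ (matCurv κb b₁ b₂ t - ω₀) ⬝ᵥ !![(0 : ℝ), 1; -1, 0] *ᵥ matCurv κb b₁ b₂ t) t := by
  refine ((hasDerivAt_matCurv b₁ b₂ t κb).sub_const ω₀ |>.dotProduct_mulVec_self hB
    |>.const_mul (1 / 2)).congr_deriv ?_
  ring

end Frame

theorem hasDerivAt_update_apply {ι : Type*} [DecidableEq ι] (θ : ι → ℝ) (i j : ι) (x : ℝ) :
    HasDerivAt (fun s => Function.update θ i s j) (if j = i then 1 else 0) x := by
  by_cases h : j = i
  · subst h
    simpa using hasDerivAt_id' x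
  · simpa [Function.update_of_ne h, h] using hasDerivAt_const x (θ j)

section Index

variable {n i : ℕ}

theorem sum_Icc_sum_Icc_sub_one_ite_eq {M : Type*} [AddCommMonoid M] (f : ℕ → ℕ → M)
    (hi1 : 1 ≤ i) (hi2 : i ≤ n - 2) :
    ∑ k ∈ Icc 1 (n - 1), ∑ j ∈ Icc (k - 1) k, (if j = i then f k j else 0) =
      ∑ k ∈ Icc i (i + 1), f k i := by
  have hmem : ∀ k ∈ Icc 1 (n - 1), i ∈ Icc (k - 1) k ↔ k ∈ Icc i (i + 1) := by
    simp only [mem_Icc]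
    omega
  have hsub : Icc i (i + 1) ⊆ Icc 1 (n - 1) := by
    intro k
    simp only [mem_Icc]
    omega
  simp only [sum_ite_eq']
  rw [sum_congr rfl fun k hk => if_congr (hmem k hk) rfl rfl, sum_ite_mem,
    inter_eq_right.mpr hsub]

theorem sum_Icc_mul_ite_sub_ite_eq {R : Type*} [Ring R] (c : ℕ → R)
    (hi1 : 1 ≤ i) (hi2 : i ≤ n - 2) :
    ∑ k ∈ Icc 1 (n - 1), c k * ((if k = i then 1 else 0) - (if k - 1 = i then 1 else 0)) =
      c i - c (i + 1) := by
  have hpred : ∀ k ∈ Icc 1 (n - 1), k - 1 = i ↔ k = i + 1 := by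
    simp only [mem_Icc]
    omega
  have hi : i ∈ Icc 1 (n - 1) := mem_Icc.mpr ⟨hi1, by omega⟩
  have hi' : i + 1 ∈ Icc 1 (n - 1) := mem_Icc.mpr ⟨by omega, by omega⟩
  simp only [mul_sub, mul_ite, mul_one, mul_zero, sum_sub_distrib]
  rw [sum_congr rfl fun k hk => if_congr (hpred k hk) rfl rfl, sum_ite_eq', sum_ite_eq',
    if_pos hi, if_pos hi']

end Index

section Energy

variable {n i : ℕ} (θ : ℕ → ℝ)

theorem hasDerivAt_Pbend_update (b₁ b₂ κb : ℕ → Fin 3 → ℝ) (ωbar : ℕ → ℕ → Fin 2 → ℝ)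
    {B : Matrix (Fin 2) (Fin 2) ℝ} (hB : B.IsSymm) (hi1 : 1 ≤ i) (hi2 : i ≤ n - 2) :
    HasDerivAt (fun s => Pbend n b₁ b₂ κb ωbar B (Function.update θ i s))
      (∑ k ∈ Icc i (i + 1), B *ᵥ (matCurv (κb k) (b₁ i) (b₂ i) (θ i) - ωbar k i) ⬝ᵥ
        !![(0 : ℝ), 1; -1, 0] *ᵥ matCurv (κb k) (b₁ i) (b₂ i) (θ i)) (θ i) := by
  rw [← sum_Icc_sum_Icc_sub_one_ite_eq
    (fun k j => B *ᵥ (matCurv (κb k) (b₁ j) (b₂ j) (θ j) - ωbar k j) ⬝ᵥ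
      !![(0 : ℝ), 1; -1, 0] *ᵥ matCurv (κb k) (b₁ j) (b₂ j) (θ j)) hi1 hi2]
  refine HasDerivAt.fun_sum fun k _ => HasDerivAt.fun_sum fun j _ => ?_
  have := (hasDerivAt_bendingTerm (b₁ j) (b₂ j) _ (κb k) (ωbar k j) hB).comp (θ i)
    (hasDerivAt_update_apply θ i j (θ i))
  simp only [Function.update_eq_self, mul_ite, mul_one, mul_zero] at this
  exact this

theorem hasDerivAt_Ptwist_update (β : ℕ → ℝ) (hi1 : 1 ≤ i) (hi2 : i ≤ n - 2) :
    HasDerivAt (fun s => Ptwist n β (Function.update θ i s))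
      (β i * (θ i - θ (i - 1)) - β (i + 1) * (θ (i + 1) - θ i)) (θ i) := by
  have hc := sum_Icc_mul_ite_sub_ite_eq (fun k => β k * (θ k - θ (k - 1))) hi1 hi2
  simp only [Nat.add_sub_cancel] at hc
  rw [← hc]
  refine HasDerivAt.fun_sum fun k _ => ?_
  have := (((hasDerivAt_update_apply θ i k (θ i)).fun_sub
    (hasDerivAt_update_apply θ i (k - 1) (θ i))).fun_pow 2).const_mul (1 / 2 * β k)
  simp only [Function.update_eq_self] at this
  exact this.congr_deriv (by ring)

end Energy

theorem total_energy_partial_derivative_general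
    (n : ℕ) (b₁ b₂ κb : ℕ → Fin 3 → ℝ)
    (ωbar : ℕ → ℕ → Fin 2 → ℝ) (B : Matrix (Fin 2) (Fin 2) ℝ) (hB : B.IsSymm)
    (β : ℕ → ℝ) (θ : ℕ → ℝ) (i : ℕ) (hi1 : 1 ≤ i) (hi2 : i ≤ n - 2) :
    HasDerivAt
      (fun s : ℝ =>
        Pbend n b₁ b₂ κb ωbar B (Function.update θ i s) +
          Ptwist n β (Function.update θ i s))
      ((∑ k ∈ Finset.Icc i (i + 1),
          (B.mulVec (matCurv (κb k) (b₁ i) (b₂ i) (θ i) - ωbar k i)) ⬝ᵥ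
            ((!![(0 : ℝ), 1; -1, 0]).mulVec (matCurv (κb k) (b₁ i) (b₂ i) (θ i)))) +
        β i * (θ i - θ (i - 1)) - β (i + 1) * (θ (i + 1) - θ i))
      (θ i) := by
  rw [add_sub_assoc]
  exact (hasDerivAt_Pbend_update θ b₁ b₂ κb ωbar hB hi1 hi2).add
    (hasDerivAt_Ptwist_update θ β hi1 hi2)

/-- The partial derivative of the total potential energy
`P = P_bend + P_twist` with respect to `θ^i`, for `1 ≤ i ≤ n − 2`, exists and equals
`Σ_{k=i}^{i+1} (B (ω^{(k,i)}(θ) − ω̄^{(k,i)}))ᵀ J ω^{(k,i)}(θ)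
  + β^i (θ^i − θ^{i−1}) − β^{i+1} (θ^{i+1} − θ^i)` with `J = !![0,1;-1,0]`. -/
theorem total_energy_partial_derivative
    (n : ℕ) (hn : 2 ≤ n) (b₁ b₂ κb : ℕ → Fin 3 → ℝ)
    (ωbar : ℕ → ℕ → Fin 2 → ℝ) (B : Matrix (Fin 2) (Fin 2) ℝ) (hB : B.IsSymm)
    (β : ℕ → ℝ) (θ : ℕ → ℝ) (i : ℕ) (hi1 : 1 ≤ i) (hi2 : i ≤ n - 2) :
    HasDerivAt
      (fun s : ℝ =>
        Pbend n b₁ b₂ κb ωbar B (Function.update θ i s) +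
          Ptwist n β (Function.update θ i s))
      ((∑ k ∈ Finset.Icc i (i + 1),
          (B.mulVec (matCurv (κb k) (b₁ i) (b₂ i) (θ i) - ωbar k i)) ⬝ᵥ
            ((!![(0 : ℝ), 1; -1, 0]).mulVec (matCurv (κb k) (b₁ i) (b₂ i) (θ i)))) +
        β i * (θ i - θ (i - 1)) - β (i + 1) * (θ (i + 1) - θ i))
      (θ i) :=
  total_energy_partial_derivative_general n b₁ b₂ κb ωbar B hB β θ i hi1 hi2
end

section
/- Let x, y ∈ ℝ³ with x ≠ y, let L ≥ 0, and let M₁, M₂ be real 3×3 matrices such that M₁ + M₂ is invertible. Set C = ‖y − x‖ − L and u = (y − x)/‖y − x‖, and define the corrections Δx = M₂ (M₁ + M₂)⁻¹ (C u) and Δy = − M₁ (M₁ + M₂)⁻¹ (C u) (matrices acting on vectors by matrix–vector multiplication). Then ‖(y + Δy) − (x + Δx)‖ = L; that is, after the correction the segment length equals its undeformed length L, so the inextensibility constraint function C_I evaluates to zero. -/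
/-!
The two corrections differ by `(M₁ + M₂) (M₁ + M₂)⁻¹ (C u) = C u`, so the edge vector `y - x` is
shortened along its own direction by exactly its excess length `C`.
-/

theorem Matrix.mul_inv_add_add_mul_inv_add {n R : Type*} [Fintype n] [DecidableEq n] [CommRing R]
    {A B : Matrix n n R} (h : IsUnit (A + B)) : A * (A + B)⁻¹ + B * (A + B)⁻¹ = 1 := by
  rw [← add_mul, mul_nonsing_inv _ ((isUnit_iff_isUnit_det _).mp h)]

theorem norm_sub_smul_inv_norm_smul_self {E : Type*} [NormedAddCommGroup E] [NormedSpace ℝ E]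
    {w : E} (hw : w ≠ 0) {L : ℝ} (hL : 0 ≤ L) :
    ‖w - (‖w‖ - L) • ‖w‖⁻¹ • w‖ = L := by
  have hw' : ‖w‖ ≠ 0 := norm_ne_zero_iff.mpr hw
  have hshrink : w - (‖w‖ - L) • ‖w‖⁻¹ • w = (L / ‖w‖) • w := by
    have hcoeff : L / ‖w‖ = 1 - (‖w‖ - L) * ‖w‖⁻¹ := by field_simp; ring
    rw [hcoeff, smul_smul, sub_smul 1, one_smul]
  rw [hshrink, norm_smul, Real.norm_of_nonneg (by positivity), div_mul_cancel₀ _ hw']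

/-- For vertices `x ≠ y` in ℝ³, undeformed length `L ≥ 0`, and mass
matrices `M₁, M₂` with `M₁ + M₂` invertible, the DEFT inextensibility corrections
`Δx = M₂ (M₁+M₂)⁻¹ (C u)` and `Δy = −M₁ (M₁+M₂)⁻¹ (C u)`, with `C = ‖y − x‖ − L` and
`u = (y − x)/‖y − x‖`, restore the edge to its undeformed length:
`‖(y + Δy) − (x + Δx)‖ = L`. -/
theorem inextensibility_correction_restores_length
    (x y : EuclideanSpace ℝ (Fin 3)) (hxy : x ≠ y) (L : ℝ) (hL : 0 ≤ L)
    (M₁ M₂ : Matrix (Fin 3) (Fin 3) ℝ) (hM : IsUnit (M₁ + M₂)) :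
    let C : ℝ := ‖y - x‖ - L
    let u : EuclideanSpace ℝ (Fin 3) := ‖y - x‖⁻¹ • (y - x)
    let Δx : EuclideanSpace ℝ (Fin 3) :=
      Matrix.toEuclideanLin (M₂ * (M₁ + M₂)⁻¹) (C • u)
    let Δy : EuclideanSpace ℝ (Fin 3) :=
      -Matrix.toEuclideanLin (M₁ * (M₁ + M₂)⁻¹) (C • u)
    ‖(y + Δy) - (x + Δx)‖ = L := by
  intro C u Δx Δy
  have hsplit : Δx - Δy = C • u := by
    rw [sub_neg_eq_add, add_comm, ← LinearMap.add_apply, ← map_add,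
      Matrix.mul_inv_add_add_mul_inv_add hM, Matrix.toLpLin_one, LinearMap.id_apply]
  calc ‖(y + Δy) - (x + Δx)‖ = ‖(y - x) - (Δx - Δy)‖ := by congr 1; abel
    _ = L := by rw [hsplit]; exact norm_sub_smul_inv_norm_smul_self (sub_ne_zero.mpr hxy.symm) hL
end

section
/- Let Ω_p, Ω_c ∈ ℝ³ with Ω_p ≠ Ω_c, let ε ≥ 0, and let I_p, I_c be real 3×3 matrices such that I_p + I_c is invertible. Set C = ‖Ω_p − Ω_c‖ − ε, and define ΔΩ_p = I_c (I_p + I_c)⁻¹ ( C · (Ω_c − Ω_p)/‖Ω_c − Ω_p‖ ) and ΔΩ_c = I_p (I_p + I_c)⁻¹ ( C · (Ω_p − Ω_c)/‖Ω_c − Ω_p‖ ). Then ‖(Ω_p + ΔΩ_p) − (Ω_c + ΔΩ_c)‖ = ε; that is, after the correction the mismatch between parent and child edge orientations equals exactly the tolerance ε, so the orientation constraint function C_O evaluates to zero. -/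
/-! The weights `I_c (I_p + I_c)⁻¹` and `I_p (I_p + I_c)⁻¹` sum to the identity, so the two
corrections differ by exactly `C` times the unit vector from `Ω_p` to `Ω_c`. The mismatch
`Ω_p - Ω_c` is thus shortened by `C` along its own direction, leaving length
`‖Ω_p - Ω_c‖ - C = ε`. -/

open Matrix

theorem norm_sub_smul_inv_norm_smul {E : Type*} [NormedAddCommGroup E] [NormedSpace ℝ E]
    {d : E} (hd : d ≠ 0) (t : ℝ) :
    ‖d - t • (‖d‖⁻¹ • d)‖ = |‖d‖ - t| := by
  have hd' : ‖d‖ ≠ 0 := norm_ne_zero_iff.mpr hd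
  have hscale : d - t • (‖d‖⁻¹ • d) = ((‖d‖ - t) / ‖d‖) • d := by
    rw [smul_smul, sub_div, div_self hd', sub_smul, one_smul, div_eq_mul_inv]
  rw [hscale, norm_smul, Real.norm_eq_abs, abs_div, abs_norm, div_mul_cancel₀ _ hd']

theorem toLpLin_mul_inv_add_toLpLin_mul_inv {R n : Type*} [CommRing R] [Fintype n]
    [DecidableEq n] (p : ENNReal) {A B : Matrix n n R} (h : IsUnit (A + B))
    (v : WithLp p (n → R)) :
    toLpLin p p (B * (A + B)⁻¹) v + toLpLin p p (A * (A + B)⁻¹) v = v := by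
  rw [← LinearMap.add_apply, ← map_add, ← add_mul, add_comm B A,
    mul_nonsing_inv _ ((isUnit_iff_isUnit_det _).mp h), toLpLin_one, LinearMap.id_apply]

/-- (DEFT Theorem 4.) For parent/child edge orientations
`Ω_p ≠ Ω_c` in ℝ³, tolerance `ε ≥ 0`, and moment-of-inertia matrices `I_p, I_c` with
`I_p + I_c` invertible, the orientation corrections
`ΔΩ_p = I_c (I_p+I_c)⁻¹ (C (Ω_c − Ω_p)/‖Ω_c − Ω_p‖)` and
`ΔΩ_c = I_p (I_p+I_c)⁻¹ (C (Ω_p − Ω_c)/‖Ω_c − Ω_p‖)`, with `C = ‖Ω_p − Ω_c‖ − ε`,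
reduce the orientation mismatch to exactly `ε`:
`‖(Ω_p + ΔΩ_p) − (Ω_c + ΔΩ_c)‖ = ε`. -/
theorem junction_orientation_correction
    (Ωp Ωc : EuclideanSpace ℝ (Fin 3)) (hΩ : Ωp ≠ Ωc) (ε : ℝ) (hε : 0 ≤ ε)
    (Ip Ic : Matrix (Fin 3) (Fin 3) ℝ) (hI : IsUnit (Ip + Ic)) :
    let C : ℝ := ‖Ωp - Ωc‖ - ε
    let ΔΩp : EuclideanSpace ℝ (Fin 3) :=
      Matrix.toEuclideanLin (Ic * (Ip + Ic)⁻¹) (C • (‖Ωc - Ωp‖⁻¹ • (Ωc - Ωp)))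
    let ΔΩc : EuclideanSpace ℝ (Fin 3) :=
      Matrix.toEuclideanLin (Ip * (Ip + Ic)⁻¹) (C • (‖Ωc - Ωp‖⁻¹ • (Ωp - Ωc)))
    ‖(Ωp + ΔΩp) - (Ωc + ΔΩc)‖ = ε := by
  intro C ΔΩp ΔΩc
  set d := Ωc - Ωp with hd_def
  have hd : d ≠ 0 := sub_ne_zero.mpr hΩ.symm
  have hC : C = ‖d‖ - ε := by rw [hd_def, norm_sub_rev]
  have hΔ : ΔΩp - ΔΩc = C • (‖d‖⁻¹ • d) := by
    have hneg : C • (‖d‖⁻¹ • (Ωp - Ωc)) = -(C • (‖d‖⁻¹ • d)) := by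
      rw [← neg_sub, smul_neg, smul_neg]
    simp only [ΔΩp, ΔΩc]
    rw [hneg, map_neg, sub_neg_eq_add, toLpLin_mul_inv_add_toLpLin_mul_inv 2 hI]
  calc ‖(Ωp + ΔΩp) - (Ωc + ΔΩc)‖ = ‖d - C • (‖d‖⁻¹ • d)‖ := by
        rw [← norm_neg, add_sub_add_comm, ← hΔ, hd_def]
        congr 1
        abel
    _ = ε := by rw [norm_sub_smul_inv_norm_smul hd, hC, sub_sub_cancel, abs_of_nonneg hε]
end

section
/- Let Ω_p, Ω_c ∈ ℝ³ with Ω_p ≠ Ω_c, let ε ≥ 0, and let i_p, i_c > 0 be real scalars. Set C = ‖Ω_p − Ω_c‖ − ε, ΔΩ_p* = (i_c/(i_p+i_c)) C (Ω_c − Ω_p)/‖Ω_c − Ω_p‖ and ΔΩ_c* = (i_p/(i_p+i_c)) C (Ω_p − Ω_c)/‖Ω_c − Ω_p‖, and define the objective g(ΔΩ_p, ΔΩ_c) = (1/2) ( ‖(Ω_p + ΔΩ_p) − (Ω_c + ΔΩ_c)‖ − ε )² for ΔΩ_p, ΔΩ_c ∈ ℝ³. Then (ΔΩ_p*, ΔΩ_c*)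 satisfies the angular momentum constraint i_p ΔΩ_p* + i_c ΔΩ_c* = 0 and achieves g(ΔΩ_p*, ΔΩ_c*) = 0, and consequently for every pair (ΔΩ_p, ΔΩ_c) ∈ ℝ³ × ℝ³ with i_p ΔΩ_p + i_c ΔΩ_c = 0 one has g(ΔΩ_p, ΔΩ_c) ≥ g(ΔΩ_p*, ΔΩ_c*); i.e., (ΔΩ_p*, ΔΩ_c*) is a global minimizer of the angular-momentum-constrained junction orientation problem. -/
/-!
Both corrections move the orientations along the line through `Ω_p` and `Ω_c`, with weights
`i_c/(i_p+i_c)` and `i_p/(i_p+i_c)` that sum to one and are inversely proportional to the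
moments of inertia. The momenta therefore cancel, and together the two corrections shorten the
relative orientation `Ω_p − Ω_c` by exactly `C`, leaving a vector of length `ε`. So the
objective vanishes at the proposed correction, and since it is a square it is nonnegative
everywhere.
-/

theorem smul_smul_div_add_smul_smul_div_neg {K E : Type*} [Field K] [AddCommGroup E]
    [Module K E] (a b : K) (w : E) :
    a • ((b / (a + b)) • w) + b • ((a / (a + b)) • -w) = 0 := by
  rw [smul_smul, smul_smul, smul_neg, ← sub_eq_add_neg, ← sub_smul, mul_div_left_comm,
    sub_self, zero_smul]

theorem norm_sub_smul_normalize_of_nonneg {E : Type*} [NormedAddCommGroup E] [NormedSpace ℝ E]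
    {v : E} (hv : v ≠ 0) {ε : ℝ} (hε : 0 ≤ ε) :
    ‖v - (‖v‖ - ε) • (‖v‖⁻¹ • v)‖ = ε := by
  have hn : ‖v‖ ≠ 0 := norm_ne_zero_iff.mpr hv
  have hrem : v - (‖v‖ - ε) • (‖v‖⁻¹ • v) = (ε * ‖v‖⁻¹) • v :=
    calc v - (‖v‖ - ε) • (‖v‖⁻¹ • v) = (1 - (‖v‖ - ε) * ‖v‖⁻¹) • v := by
          rw [sub_smul _ _ v, one_smul, smul_smul]
      _ = (ε * ‖v‖⁻¹) • v := by
          congr 1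
          field_simp
          ring
  rw [hrem, norm_smul, Real.norm_of_nonneg (by positivity), mul_assoc, inv_mul_cancel₀ hn,
    mul_one]

theorem add_smul_sub_add_smul_neg {K E : Type*} [Ring K] [AddCommGroup E] [Module K E]
    {a b : K} (hab : a + b = 1) (x y d : E) :
    (x + a • d) - (y + b • -d) = (x - y) + d := by
  calc (x + a • d) - (y + b • -d) = (x - y) + (a + b) • d := by rw [add_smul, smul_neg]; abel
    _ = (x - y) + d := by rw [hab, one_smul]

/-- (DEFT Theorem 4, scalar form.) For parent/child edge orientations
`Ω_p ≠ Ω_c` in ℝ³, tolerance `ε ≥ 0`, and scalar moments of inertia `i_p, i_c > 0`, the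
corrections `ΔΩ_p* = (i_c/(i_p+i_c)) C (Ω_c − Ω_p)/‖Ω_c − Ω_p‖` and
`ΔΩ_c* = (i_p/(i_p+i_c)) C (Ω_p − Ω_c)/‖Ω_c − Ω_p‖`, with `C = ‖Ω_p − Ω_c‖ − ε`,
satisfy the angular-momentum constraint `i_p ΔΩ_p* + i_c ΔΩ_c* = 0`, achieve zero
objective value for `g(ΔΩ_p, ΔΩ_c) = (1/2)(‖(Ω_p + ΔΩ_p) − (Ω_c + ΔΩ_c)‖ − ε)²`, and
are a global minimizer of the angular-momentum-constrained junction orientation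
problem. -/
theorem junction_orientation_global_minimizer
    (Ωp Ωc : EuclideanSpace ℝ (Fin 3)) (hΩ : Ωp ≠ Ωc) (ε : ℝ) (hε : 0 ≤ ε)
    (ip ic : ℝ) (hip : 0 < ip) (hic : 0 < ic) :
    let C : ℝ := ‖Ωp - Ωc‖ - ε
    let ΔΩp' : EuclideanSpace ℝ (Fin 3) :=
      (ic / (ip + ic)) • (C • (‖Ωc - Ωp‖⁻¹ • (Ωc - Ωp)))
    let ΔΩc' : EuclideanSpace ℝ (Fin 3) :=
      (ip / (ip + ic)) • (C • (‖Ωc - Ωp‖⁻¹ • (Ωp - Ωc)))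
    let g : EuclideanSpace ℝ (Fin 3) → EuclideanSpace ℝ (Fin 3) → ℝ :=
      fun ΔΩp ΔΩc => (1 / 2) * (‖(Ωp + ΔΩp) - (Ωc + ΔΩc)‖ - ε) ^ 2
    ip • ΔΩp' + ic • ΔΩc' = 0 ∧
    g ΔΩp' ΔΩc' = 0 ∧
    ∀ ΔΩp ΔΩc : EuclideanSpace ℝ (Fin 3),
      ip • ΔΩp + ic • ΔΩc = 0 → g ΔΩp' ΔΩc' ≤ g ΔΩp ΔΩc := by
  intro C ΔΩp' ΔΩc' g
  have hchild : ΔΩc' = (ip / (ip + ic)) • -(C • (‖Ωc - Ωp‖⁻¹ • (Ωc - Ωp))) := by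
    simp only [ΔΩc', ← neg_sub Ωc Ωp, smul_neg]
  have hweights : ic / (ip + ic) + ip / (ip + ic) = 1 := by
    rw [← add_div, add_comm, div_self (by positivity)]
  have hrelative : ‖(Ωp + ΔΩp') - (Ωc + ΔΩc')‖ = ε := by
    rw [hchild, add_smul_sub_add_smul_neg hweights, norm_sub_rev Ωc Ωp, ← neg_sub Ωp Ωc,
      smul_neg, smul_neg, ← sub_eq_add_neg]
    exact norm_sub_smul_normalize_of_nonneg (sub_ne_zero.mpr hΩ) hε
  have hg0 : g ΔΩp' ΔΩc' = 0 := by simp only [g, hrelative, sub_self]; ring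
  refine ⟨?_, hg0, fun ΔΩp ΔΩc _ => hg0 ▸ by positivity⟩
  rw [hchild]
  exact smul_smul_div_add_smul_smul_div_neg ip ic _
end
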